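/- Let Z and W be nonempty words over the alphabet {L, M, R} satisfying ZW = W̄Z̄. Set m = |ZW|, r = |W| and d = gcd(m, r). If m/d is odd, then ZW = M^m, i.e., every letter of Z and of W is M. -/

import Mathlib

/-- The three-letter alphabet {L, M, R}. -/
inductive Letter : Type
  | L | M | R
deriving DecidableEq, Repr

/-- Complementation on letters: R̄ = L, L̄ = R, M̄ = M. -/
def Letter.bar : Letter → Letter
  | .L => .R
  | .M => .M
  | .R => .L

/-- Complement of a word (letterwise). -/
def comp (w : List Letter) : List Letter := w.map Letter.bar

/-- k-fold concatenation of a word with itself. -/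
def npow (w : List Letter) : ℕ → List Letter
  | 0 => []
  | n + 1 => w ++ npow w n

/-!
Write `S = ZW`. The hypothesis `ZW = W̄Z̄` says that rotating `S` by `r = |W|` letters
complements it. Complementation is an involution commuting with rotation, so rotating by
`k r` letters gives `S` or `S̄` according to the parity of `k`. For `k = m / d` the rotation
amount `k r = lcm(m, r)` is a multiple of `m = |S|`, so it fixes `S`; as `k` is odd, `S̄ = S`,
and `M` is the only self-complementary letter.
-/

theorem Letter.bar_involutive : Function.Involutive Letter.bar := by
  intro a; cases a <;> rfl

theorem Letter.eq_M_of_bar_eq {a : Letter} (h : a.bar = a) : a = .M := by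
  cases a <;> simp_all [Letter.bar]

theorem comp_involutive : Function.Involutive comp := fun l => by
  simp [comp, Letter.bar_involutive.comp_self]

theorem comp_rotate (l : List Letter) (n : ℕ) : comp (l.rotate n) = (comp l).rotate n :=
  List.map_rotate _ _ _

theorem eq_replicate_M_of_comp_eq {l : List Letter} (h : comp l = l) :
    l = List.replicate l.length .M :=
  List.eq_replicate_iff.2 ⟨rfl, fun _ hb =>
    Letter.eq_M_of_bar_eq (List.map_inj_left.1 (h.trans (List.map_id l).symm) _ hb)⟩

theorem rotate_length_eq_comp_of_append_eq {Z W : List Letter} (h : Z ++ W = comp W ++ comp Z) :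
    (Z ++ W).rotate W.length = comp (Z ++ W) := by
  have hlen : (comp W).length = W.length := List.length_map _
  conv_lhs => rw [h, ← hlen, List.rotate_append_length_eq]
  exact (List.map_append ..).symm

theorem rotate_mul_eq_iterate_comp {l : List Letter} {n : ℕ} (h : l.rotate n = comp l) (k : ℕ) :
    l.rotate (k * n) = comp^[k] l := by
  induction k with
  | zero => simp
  | succ k ih =>
    rw [Nat.succ_mul, add_comm, ← List.rotate_rotate, h, ← comp_rotate, ih,
      Function.iterate_succ_apply']

theorem Nat.dvd_div_gcd_mul (m r : ℕ) : m ∣ m / Nat.gcd m r * r := by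
  rw [Nat.div_mul_right_comm (Nat.gcd_dvd_left m r)]
  exact Nat.dvd_lcm_left m r

theorem stmt_1_general (Z W : List Letter)
    (heq : Z ++ W = comp W ++ comp Z)
    (m r d : ℕ) (hm : m = (Z ++ W).length) (hr : r = W.length)
    (hd : d = Nat.gcd m r)
    (hodd : Odd (m / d)) :
    Z ++ W = List.replicate m Letter.M := by
  subst hd
  have hrot : (Z ++ W).rotate r = comp (Z ++ W) := hr ▸ rotate_length_eq_comp_of_append_eq heq
  have hfix : comp (Z ++ W) = Z ++ W := by
    obtain ⟨c, hc⟩ := Nat.dvd_div_gcd_mul m r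
    rw [← comp_involutive.iterate_odd hodd, ← rotate_mul_eq_iterate_comp hrot, hc, hm,
      List.rotate_length_mul]
  rw [hm]
  exact eq_replicate_M_of_comp_eq hfix

theorem stmt_1 (Z W : List Letter) (hZ : Z ≠ []) (hW : W ≠ [])
    (heq : Z ++ W = comp W ++ comp Z)
    (m r d : ℕ) (hm : m = (Z ++ W).length) (hr : r = W.length)
    (hd : d = Nat.gcd m r)
    (hodd : Odd (m / d)) :
    Z ++ W = List.replicate m Letter.M :=
  stmt_1_general Z W heq m r d hm hr hd hodd
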